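/- arXiv:1611.07551 — 3 statements merged into one kernel-verified Lean document; each statement's English description precedes it below -/
import Mathlib

section
/- Let P be a Markov kernel on X. Suppose φ is an irreducibility measure for the chain (i.e., φ is nontrivial and φ(A) > 0 implies L(x,A) > 0 for all x ∈ X) satisfying: φ(A) = 0 implies φ{y : P(y,A) > 0} = 0 for all measurable A. Assume moreover there exists a maximal irreducibility measure ψ' (i.e., ψ' is an irreducibility measure and for all measurable A, (L(x,A) > 0 for all x) implies ψ'(A) > 0). Then φ itself is a maximal irreducibility measure: for all measurable A, if L(x,A) > 0 for all x ∈ X, then φ(A) > 0. -/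
open MeasureTheory ProbabilityTheory
open scoped ENNReal NNReal

/-- The `n`-step transition kernel. -/
noncomputable def stepn {X : Type*} [MeasurableSpace X] (P : Kernel X X) : ℕ → Kernel X X
  | 0 => Kernel.id
  | n + 1 => (stepn P n).comp P

theorem stmt2 {X : Type*} [MeasurableSpace X] (P : Kernel X X) [IsMarkovKernel P]
    (L : X → Set X → ℝ≥0∞)
    (hL : ∀ (x : X) (A : Set X), 0 < L x A ↔ ∃ n : ℕ, 1 ≤ n ∧ 0 < stepn P n x A)
    -- φ is an irreducibility measure:
    (φ : Measure X) [IsFiniteMeasure φ] (hφne : φ ≠ 0)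
    (hirr : ∀ A : Set X, MeasurableSet A → 0 < φ A → ∀ x : X, 0 < L x A)
    -- the absolute-continuity-type condition on φ:
    (habs : ∀ A : Set X, MeasurableSet A → φ A = 0 → φ {y | 0 < P y A} = 0)
    -- there exists a maximal irreducibility measure ψ':
    (ψ' : Measure X) [IsFiniteMeasure ψ'] (hψne : ψ' ≠ 0)
    (hψirr : ∀ A : Set X, MeasurableSet A → 0 < ψ' A → ∀ x : X, 0 < L x A)
    (hψmax : ∀ A : Set X, MeasurableSet A → (∀ x : X, 0 < L x A) → 0 < ψ' A) :
    ∀ A : Set X, MeasurableSet A → (∀ x : X, 0 < L x A) → 0 < φ A := by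
  intro A hA hLA
  by_contra hφA
  push_neg at hφA
  have hφA0 : φ A = 0 := le_antisymm hφA (zero_le)
  set C : ℕ → Set X := fun n => {y | 0 < stepn P n y A} with hC
  have hmeas : ∀ n, MeasurableSet (C n) :=
    fun n => measurableSet_lt measurable_const ((stepn P n).measurable_coe hA)
  have hnull : ∀ n, φ (C n) = 0 := by
    intro n
    induction n with
    | zero =>
      refine measure_mono_null (fun y hy => ?_) hφA0
      simp only [hC, Set.mem_setOf_eq] at hy
      by_contra h
      rw [show stepn P 0 = Kernel.id from rfl, Kernel.id_apply,
        Measure.dirac_apply' y hA, Set.indicator_of_notMem h] at hy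
      exact lt_irrefl _ hy
    | succ n ih =>
      have hsub : C (n + 1) ⊆ {y | 0 < P y (C n)} := by
        intro y hy
        simp only [hC, Set.mem_setOf_eq] at hy ⊢
        by_contra h
        push_neg at h
        have hP0 : P y (C n) = 0 := le_antisymm h (zero_le)
        have hae : (fun z => stepn P n z A) =ᵐ[P y] 0 := by
          rw [Filter.EventuallyEq, ae_iff]
          refine measure_mono_null (fun z hz => ?_) hP0
          simp only [Set.mem_setOf_eq, Pi.zero_apply] at hz
          exact pos_iff_ne_zero.2 hz
        have hz : stepn P (n + 1) y A = 0 := by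
          rw [show stepn P (n + 1) = (stepn P n).comp P from rfl,
            Kernel.comp_apply' _ _ _ hA, lintegral_congr_ae hae]
          simp
        rw [hz] at hy
        exact lt_irrefl _ hy
      exact measure_mono_null hsub (habs _ (hmeas n) ih)
  have hcover : (Set.univ : Set X) ⊆ ⋃ n, C n := by
    intro x _
    obtain ⟨n, _, hn⟩ := (hL x A).1 (hLA x)
    exact Set.mem_iUnion.2 ⟨n, hn⟩
  have huniv : φ Set.univ = 0 :=
    measure_mono_null hcover (measure_iUnion_null hnull)
  exact hφne (Measure.measure_univ_eq_zero.1 huniv)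
end

section
/- For every finite subset η of ℝ^d and every r > 0 and designated point x₀ ∈ ℝ^d, there exists a finite sequence of finite subsets ζ₀ = ∅, ζ₁, ..., ζ_n = η of ℝ^d such that each ζ_{k+1} differs from ζ_k by exactly one point (|ζ_k △ ζ_{k+1}| = 1), and whenever ζ_{k+1} = ζ_k ∪ {z} is obtained by adding a point: if ζ_k = ∅ then z = x₀, and otherwise there exists y ∈ ζ_k with |z − y| ≤ r/2. -/
open scoped symmDiff

noncomputable section
open Classical

abbrev Euc (d : ℕ) := EuclideanSpace ℝ (Fin d)

/-- A path of configurations: consecutive configurations differ by exactly one point, and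
when a point `z` is added to `ζ k`, it must equal `x₀` if `ζ k = ∅`, and otherwise
lie within distance `r/2` of some point of `ζ k`. -/
def IsPath {d : ℕ} (r : ℝ) (x₀ : Euc d) (ζ : ℕ → Finset (Euc d)) (n : ℕ) : Prop :=
  ∀ k < n, ((ζ k) ∆ (ζ (k + 1))).card = 1 ∧
    ∀ z : Euc d, z ∉ ζ k → ζ (k + 1) = insert z (ζ k) →
      (ζ k = ∅ → z = x₀) ∧ (ζ k ≠ ∅ → ∃ y ∈ ζ k, dist z y ≤ r / 2)

lemma symm_card {d : ℕ} {A : Finset (Euc d)} {z : Euc d} (hz : z ∉ A) :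
    (A ∆ insert z A).card = 1 := by
  have : A ∆ insert z A = {z} := by
    ext x
    simp only [Finset.mem_symmDiff, Finset.mem_insert, Finset.mem_singleton]
    constructor
    · rintro (⟨hx, h⟩ | ⟨(rfl | hx), h⟩) <;> tauto
    · rintro rfl; tauto
  rw [this]; simp

lemma step_birth {d : ℕ} {r : ℝ} {x₀ : Euc d} {A : Finset (Euc d)} {z : Euc d} (hz : z ∉ A)
    (h : (A = ∅ → z = x₀) ∧ (A ≠ ∅ → ∃ y ∈ A, dist z y ≤ r / 2)) :
    ∃ n ζ, ζ 0 = A ∧ ζ n = insert z A ∧ IsPath r x₀ ζ n := by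
  refine ⟨1, fun k => if k = 0 then A else insert z A, by simp, by simp, ?_⟩
  intro k hk
  interval_cases k
  simp only [if_pos rfl, if_neg one_ne_zero]
  refine ⟨symm_card hz, fun z' hz' hins => ?_⟩
  norm_num at hins
  have : z' = z := by
    have : z' ∈ insert z A := hins ▸ Finset.mem_insert_self z' A
    rcases Finset.mem_insert.1 this with h' | h'
    · exact h'
    · exact absurd h' hz'
  subst this; exact h

lemma step_death {d : ℕ} {r : ℝ} {x₀ : Euc d} {B : Finset (Euc d)} {w : Euc d} (hw : w ∉ B) :
    ∃ n ζ, ζ 0 = insert w B ∧ ζ n = B ∧ IsPath r x₀ ζ n := by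
  refine ⟨1, fun k => if k = 0 then insert w B else B, by simp, by simp, ?_⟩
  intro k hk
  interval_cases k
  simp only [if_pos rfl, if_neg one_ne_zero]
  constructor
  · rw [symmDiff_comm]; exact symm_card hw
  · intro z' hz' hins
    exfalso
    norm_num at hins hz'
    have : w ∈ B := by
      rw [hins]; exact Finset.mem_insert_of_mem (Finset.mem_insert_self w B)
    exact hw this

lemma path_comp {d : ℕ} {r : ℝ} {x₀ : Euc d} {n1 n2 : ℕ} {ζ1 ζ2 : ℕ → Finset (Euc d)}
    (h12 : ζ1 n1 = ζ2 0) (h1 : IsPath r x₀ ζ1 n1) (h2 : IsPath r x₀ ζ2 n2) :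
    ∃ ζ, ζ 0 = ζ1 0 ∧ ζ (n1 + n2) = ζ2 n2 ∧ IsPath r x₀ ζ (n1 + n2) := by
  refine ⟨fun k => if k ≤ n1 then ζ1 k else ζ2 (k - n1), by simp, ?_, ?_⟩
  · by_cases h : n2 = 0
    · subst h; simpa using h12
    · have : ¬ (n1 + n2 ≤ n1) := by omega
      simp [this]
  · intro k hk
    by_cases hA : k + 1 ≤ n1
    · have hk1 : k ≤ n1 := by omega
      simpa [hA, hk1] using h1 k (by omega)
    · by_cases hB : k ≤ n1
      · have hkeq : k = n1 := by omega
        subst hkeq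
        have hn2 : 0 < n2 := by omega
        have e1 : k + 1 - k = 1 := by omega
        simpa [hA, hB, e1, h12] using h2 0 hn2
      · have e1 : k + 1 - n1 = (k - n1) + 1 := by omega
        simpa [hA, hB, e1] using h2 (k - n1) (by omega)

lemma path_refl {d : ℕ} {r : ℝ} {x₀ : Euc d} (A : Finset (Euc d)) :
    ∃ n ζ, ζ 0 = A ∧ ζ n = A ∧ IsPath r x₀ ζ n :=
  ⟨0, fun _ => A, rfl, rfl, fun k hk => absurd hk (Nat.not_lt_zero k)⟩

lemma insert_far {d : ℕ} {r : ℝ} (hr : 0 < r) (x₀ : Euc d) :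
    ∀ m : ℕ, ∀ S : Finset (Euc d), ∀ z y : Euc d,
      z ∉ S → y ∈ S → dist z y ≤ m * (r / 4) →
      ∃ n ζ, ζ 0 = S ∧ ζ n = insert z S ∧ IsPath r x₀ ζ n := by
  intro m
  induction m with
  | zero =>
    intro S z y hz hy hdist
    exfalso
    have h0 : dist z y ≤ 0 := by simpa using hdist
    have hzy : z = y := dist_eq_zero.1 (le_antisymm h0 dist_nonneg)
    exact hz (hzy ▸ hy)
  | succ m ih =>
    intro S z y hz hy hdist
    have hSne : S ≠ ∅ := Finset.ne_empty_of_mem hy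
    by_cases hle : dist z y ≤ r / 2
    · exact step_birth hz ⟨fun h => absurd h hSne, fun _ => ⟨y, hy, hle⟩⟩
    · push_neg at hle
      have hD : 0 < dist z y := lt_trans (by positivity) hle
      have hzy : z ≠ y := by
        intro h; rw [h] at hD; simp at hD
      have hab : r / (4 * dist z y) < r / (2 * dist z y) := by
        rw [div_lt_div_iff₀ (by positivity) (by positivity)]
        nlinarith
      set f : ℝ → Euc d := fun t => y + t • (z - y) with hf
      have hfinj : Function.Injective f := by
        intro s t hst
        have h1 : s • (z - y) = t • (z - y) := by
          have := hst
          simpa [hf] using this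
        exact smul_left_injective ℝ (sub_ne_zero.2 hzy) h1
      have hIinf : (Set.Ioo (r / (4 * dist z y)) (r / (2 * dist z y))).Infinite :=
        Set.Ioo_infinite hab
      have himg : (f '' Set.Ioo (r / (4 * dist z y)) (r / (2 * dist z y))).Infinite :=
        hIinf.image (hfinj.injOn)
      obtain ⟨w, hwmem, hwnot⟩ := (himg.diff (insert z S).finite_toSet).nonempty
      obtain ⟨t, ht, rfl⟩ := hwmem
      have htpos : 0 < t := lt_trans (by positivity) ht.1
      have hft_sub : f t - y = t • (z - y) := by simp [hf]
      have hdist_wy : dist (f t) y = t * dist z y := by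
        rw [dist_eq_norm, hft_sub, norm_smul, Real.norm_eq_abs, abs_of_pos htpos,
          ← dist_eq_norm]
      have htb : t * dist z y < r / 2 := by
        calc t * dist z y < (r / (2 * dist z y)) * dist z y :=
              mul_lt_mul_of_pos_right ht.2 hD
          _ = r / 2 := by field_simp
      have hta : r / 4 < t * dist z y := by
        calc r / 4 = (r / (4 * dist z y)) * dist z y := by field_simp
          _ < t * dist z y := mul_lt_mul_of_pos_right ht.1 hD
      have ht1 : t < 1 := by
        have h2 : r / (2 * dist z y) < 1 := by
          rw [div_lt_one (by positivity)]; linarith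
        linarith [ht.2]
      have hz_sub : z - f t = (1 - t) • (z - y) := by
        simp only [hf, sub_smul, one_smul]
        abel
      have hdist_zw : dist z (f t) = (1 - t) * dist z y := by
        rw [dist_eq_norm, hz_sub, norm_smul, Real.norm_eq_abs,
          abs_of_pos (by linarith : (0:ℝ) < 1 - t), ← dist_eq_norm]
      have hdist_zw' : dist z (f t) ≤ m * (r / 4) := by
        push_cast at hdist
        rw [hdist_zw]
        nlinarith
      have hwS : f t ∉ S := fun h => hwnot (by simp [h])
      have hwz : f t ≠ z := fun h => hwnot (by simp [h])
      obtain ⟨n1, ζ1, h10, h1n, h1p⟩ :=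
        step_birth (r := r) (x₀ := x₀) hwS
          ⟨fun h => absurd h hSne, fun _ => ⟨y, hy, le_of_lt (hdist_wy ▸ htb)⟩⟩
      obtain ⟨n2, ζ2, h20, h2n, h2p⟩ :=
        ih (insert (f t) S) z (f t)
          (by simp [hz, Ne.symm hwz]) (Finset.mem_insert_self _ _) hdist_zw'
      obtain ⟨n3, ζ3, h30, h3n, h3p⟩ :=
        step_death (r := r) (x₀ := x₀) (B := insert z S) (w := f t)
          (by simp [hwz, hwS])
      obtain ⟨ζ12, h120, h12n, h12p⟩ := path_comp (h1n.trans h20.symm) h1p h2p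
      have hmid : ζ12 (n1 + n2) = ζ3 0 := by
        rw [h12n, h2n, h30, Finset.insert_comm]
      obtain ⟨ζ, hc0, hcn, hcp⟩ := path_comp hmid h12p h3p
      exact ⟨n1 + n2 + n3, ζ, hc0.trans (h120.trans h10), hcn.trans h3n, hcp⟩

lemma union_path {d : ℕ} {r : ℝ} (hr : 0 < r) (x₀ : Euc d) (T : Finset (Euc d)) :
    ∀ S : Finset (Euc d), S.Nonempty →
      ∃ n ζ, ζ 0 = S ∧ ζ n = S ∪ T ∧ IsPath r x₀ ζ n := by
  induction T using Finset.induction with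
  | empty =>
    intro S hS
    simpa using path_refl (r := r) (x₀ := x₀) S
  | @insert a T haT ihT =>
    intro S hS
    obtain ⟨n1, ζ1, h10, h1n, h1p⟩ := ihT S hS
    by_cases haST : a ∈ S ∪ T
    · have heq : S ∪ insert a T = S ∪ T := by
        rw [Finset.union_insert, Finset.insert_eq_self.2 haST]
      rw [← heq] at h1n
      exact ⟨n1, ζ1, h10, h1n, h1p⟩
    · obtain ⟨y, hy⟩ := hS
      obtain ⟨m, hm⟩ : ∃ m : ℕ, dist a y ≤ m * (r / 4) := by
        obtain ⟨m, hm⟩ := exists_nat_ge (dist a y / (r / 4))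
        refine ⟨m, ?_⟩
        rw [div_le_iff₀ (by positivity)] at hm
        linarith
      obtain ⟨n2, ζ2, h20, h2n, h2p⟩ :=
        insert_far hr x₀ m (S ∪ T) a y haST (Finset.mem_union_left T hy) hm
      obtain ⟨ζ, h0, hn, hp⟩ := path_comp (h1n.trans h20.symm) h1p h2p
      exact ⟨n1 + n2, ζ, h0.trans h10, hn.trans (by rw [h2n, Finset.union_insert]), hp⟩

theorem stmt3 {d : ℕ} (η : Finset (Euc d)) (r : ℝ) (hr : 0 < r) (x₀ : Euc d) :
    ∃ (n : ℕ) (ζ : ℕ → Finset (Euc d)),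
      ζ 0 = ∅ ∧ ζ n = η ∧ IsPath r x₀ ζ n := by
  by_cases hη : η = ∅
  · subst hη
    exact path_refl ∅
  · obtain ⟨n1, ζ1, h10, h1n, h1p⟩ :=
      step_birth (r := r) (x₀ := x₀) (A := (∅ : Finset (Euc d))) (z := x₀)
        (Finset.notMem_empty x₀) ⟨fun _ => rfl, fun h => absurd rfl h⟩
    obtain ⟨n2, ζ2, h20, h2n, h2p⟩ :=
      union_path hr x₀ η (insert x₀ ∅) ⟨x₀, Finset.mem_insert_self _ _⟩
    obtain ⟨ζ12, h120, h12n, h12p⟩ := path_comp (h1n.trans h20.symm) h1p h2p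
    by_cases hx : x₀ ∈ η
    · have heq : insert x₀ ∅ ∪ η = η := by
        rw [Finset.insert_union, Finset.empty_union, Finset.insert_eq_self.2 hx]
      exact ⟨n1 + n2, ζ12, h120.trans h10, h12n.trans (h2n.trans heq), h12p⟩
    · obtain ⟨n3, ζ3, h30, h3n, h3p⟩ :=
        step_death (r := r) (x₀ := x₀) (B := η) (w := x₀) hx
      have hmid : ζ12 (n1 + n2) = ζ3 0 := by
        rw [h12n, h2n, h30, Finset.insert_union, Finset.empty_union]
      obtain ⟨ζ, hc0, hcn, hcp⟩ := path_comp hmid h12p h3p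
      exact ⟨n1 + n2 + n3, ζ, hc0.trans (h120.trans h10), hcn.trans h3n, hcp⟩
end
end

section
/- Let η = {x₁,...,x_n} and ζ be n-point configurations in ℝ^d with ρ(η,ζ) ≤ a where a < r/4, and suppose z ∈ ℝ^d satisfies |z − y| ≤ r/2 for some y ∈ η. Then for every x in the closed ball of radius a around z that does not belong to ζ, there exists y' ∈ ζ with |x − y'| < r, and moreover ζ ∪ {x} ∈ B_ρ(η ∪ {z}, a), i.e., ρ(η ∪ {z}, ζ ∪ {x}) ≤ a (assuming z ∉ η and x ∉ ζ). -/
open scoped NNReal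

noncomputable section
open Classical

/-- The matching distance between two finite configurations:
`ρ(η,ζ) = min` over bijections `ς : η → ζ` of `max_{x ∈ η} dist (ς x) x`. -/
def rho {d : ℕ} (η ζ : Finset (Euc d)) : ℝ≥0 :=
  sInf {a : ℝ≥0 | ∃ f : Euc d → Euc d, Set.BijOn f ↑η ↑ζ ∧
    a = η.sup fun x => nndist (f x) x}

theorem stmt12 {d n : ℕ} (η ζ : Finset (Euc d)) (hη : η.card = n) (hζ : ζ.card = n)
    (a r : ℝ≥0) (ha : 0 < a) (har : (a : ℝ) < r / 4) (hρ : rho η ζ ≤ a)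
    (z : Euc d) (hz : ∃ y ∈ η, dist z y ≤ r / 2) (hzη : z ∉ η)
    (x : Euc d) (hx : x ∈ Metric.closedBall z (a : ℝ)) (hxζ : x ∉ ζ) :
    (∃ y' ∈ ζ, dist x y' < r) ∧ rho (insert z η) (insert x ζ) ≤ a := by
  classical
  have hcard : η.card = ζ.card := hη.trans hζ.symm
  set S : Set ℝ≥0 := {a : ℝ≥0 | ∃ f : Euc d → Euc d, Set.BijOn f ↑η ↑ζ ∧
    a = η.sup fun x => nndist (f x) x} with hSdef
  have hSne : S.Nonempty := by
    have e := Finset.equivOfCardEq hcard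
    refine ⟨_, fun v => if h : v ∈ η then (e ⟨v, h⟩ : Euc d) else v, ?_, rfl⟩
    constructor
    · intro v hv
      simp only [Finset.mem_coe] at hv ⊢
      simp [hv, Finset.coe_mem]
    constructor
    · intro u hu v hv huv
      simp only [Finset.mem_coe] at hu hv
      simp only [hu, hv, dif_pos] at huv
      have := e.injective (Subtype.ext huv)
      exact congrArg Subtype.val this
    · intro w hw
      simp only [Finset.mem_coe] at hw
      refine ⟨(e.symm ⟨w, hw⟩ : Euc d), by simp [Finset.coe_mem], ?_⟩
      simp [Finset.coe_mem]
  have key : ∀ b : ℝ≥0, rho η ζ < b →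
      ∃ f : Euc d → Euc d, Set.BijOn f ↑η ↑ζ ∧ (η.sup fun x => nndist (f x) x) < b := by
    intro b hb
    have hb' : sInf S < b := hb
    obtain ⟨c, hc, hcb⟩ := exists_lt_of_csInf_lt hSne hb'
    obtain ⟨f, hf, rfl⟩ := hc
    exact ⟨f, hf, hcb⟩
  have hxz : dist x z ≤ (a : ℝ) := Metric.mem_closedBall.mp hx
  constructor
  · -- first part
    have hr4 : rho η ζ < r / 4 := by
      refine lt_of_le_of_lt hρ ?_
      rw [← NNReal.coe_lt_coe]
      push_cast
      linarith
    obtain ⟨f, hf, hfs⟩ := key (r / 4) hr4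
    obtain ⟨y, hy, hzy⟩ := hz
    refine ⟨f y, hf.mapsTo hy, ?_⟩
    have h1 : nndist (f y) y ≤ η.sup fun v => nndist (f v) v :=
      Finset.le_sup (f := fun v => nndist (f v) v) hy
    have h2 : dist (f y) y < (r : ℝ) / 4 := by
      have := lt_of_le_of_lt h1 hfs
      rw [← NNReal.coe_lt_coe] at this
      push_cast at this
      linarith
    have h3 : dist x (f y) ≤ dist x z + dist z y + dist y (f y) := dist_triangle4 x z y (f y)
    rw [dist_comm y (f y)] at h3
    linarith
  · -- second part
    refine le_of_forall_pos_le_add ?_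
    intro ε hε
    have hlt : rho η ζ < a + ε := lt_of_le_of_lt hρ (lt_add_of_pos_right a hε)
    obtain ⟨f, hf, hfs⟩ := key (a + ε) hlt
    set g : Euc d → Euc d := fun v => if v = z then x else f v with hg
    have hgz : g z = x := if_pos rfl
    have hgη : Set.EqOn f g ↑η := by
      intro v hv
      have hvz : v ≠ z := fun h => hzη (h ▸ hv)
      simp [hg, hvz]
    have hbij : Set.BijOn g ↑(insert z η) ↑(insert x ζ) := by
      rw [Finset.coe_insert, Finset.coe_insert]
      have h1 : Set.BijOn g ↑η ↑ζ := hf.congr hgη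
      have h2 := h1.insert (a := z) (by rw [hgz]; exact fun h => hxζ h)
      rwa [hgz] at h2
    have hsup : ((insert z η).sup fun v => nndist (g v) v) ≤ a + ε := by
      rw [Finset.sup_insert]
      refine sup_le ?_ ?_
      · rw [hgz]
        have : nndist x z ≤ a := by
          rw [← NNReal.coe_le_coe, coe_nndist]
          exact hxz
        exact this.trans (le_add_of_nonneg_right zero_le)
      · have : (η.sup fun v => nndist (g v) v) = η.sup fun v => nndist (f v) v :=
          Finset.sup_congr rfl (fun v hv => by rw [hgη hv])
        rw [this]
        exact hfs.le
    calc rho (insert z η) (insert x ζ)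
        ≤ (insert z η).sup fun v => nndist (g v) v := by
          refine csInf_le (OrderBot.bddBelow _) ?_
          exact ⟨g, hbij, rfl⟩
      _ ≤ a + ε := hsup
end
end
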